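/- arXiv:2503.16028 — 6 statements merged into one kernel-verified Lean document; each statement's English description precedes it below -/
import Mathlib

section
/- Under the bounds of the reweighting lemma, the reweighting operator L is Lipschitz with constant 2/(κ₁κ₂) with respect to the total variation distance: d(Lν, Lμ) ≤ (2/(κ₁κ₂)) d(ν, μ). -/
open MeasureTheory Real
open scoped ENNReal

/-- The reweighting operator `L`, `(Lμ)(f) = μ(f e^{−Φ})/μ(e^{−Φ})`, is Lipschitz with
constant `2/(κ₁κ₂)` in total variation distance: `d(Lν, Lμ) ≤ (2/(κ₁κ₂)) d(ν, μ)`. -/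
theorem stmt_2 {H : Type*} [MeasurableSpace H]
    (μ ν : Measure H) [IsProbabilityMeasure μ] [IsProbabilityMeasure ν]
    (Φ : H → ℝ) (κ₁ κ₂ : ℝ) (hκ₁ : 0 < κ₁) (hκ₂ : 0 < κ₂)
    (hΦ : Measurable Φ) (hΦ0 : ∀ x, 0 ≤ Φ x)
    (hg1 : ∀ x, Real.exp (-Φ x) ≤ κ₁⁻¹)
    (hνg : κ₂ < ∫ x, Real.exp (-Φ x) ∂ν) (hμg : κ₂ < ∫ x, Real.exp (-Φ x) ∂μ) :
    (⨆ f : {f : H → ℝ // Measurable f ∧ ∀ x, |f x| ≤ 1},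
        abs ((∫ x, f.1 x * Real.exp (-Φ x) ∂ν) / (∫ x, Real.exp (-Φ x) ∂ν) -
          (∫ x, f.1 x * Real.exp (-Φ x) ∂μ) / (∫ x, Real.exp (-Φ x) ∂μ)))
      ≤ (2 / (κ₁ * κ₂)) *
        ⨆ f : {f : H → ℝ // Measurable f ∧ ∀ x, |f x| ≤ 1},
          abs ((∫ x, f.1 x ∂ν) - ∫ x, f.1 x ∂μ) := by
  set g : H → ℝ := fun x => Real.exp (-Φ x) with hgdef
  have hg_meas : Measurable g := (hΦ.neg).exp
  have hg_pos : ∀ x, 0 < g x := fun x => Real.exp_pos _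
  have hκ₁inv : (0:ℝ) < κ₁⁻¹ := inv_pos.mpr hκ₁
  set T := {f : H → ℝ // Measurable f ∧ ∀ x, |f x| ≤ 1}
  set S : ℝ := ⨆ f : T, |(∫ x, f.1 x ∂ν) - ∫ x, f.1 x ∂μ| with hSdef
  -- integrability of bounded measurable functions
  have hint : ∀ (m : Measure H) [IsProbabilityMeasure m] (h : H → ℝ) (C : ℝ),
      Measurable h → (∀ x, |h x| ≤ C) → Integrable h m := by
    intro m _ h C hm hb
    exact (integrable_const C).mono' hm.aestronglyMeasurable (ae_of_all _ fun x => hb x)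
  -- each term is at most 2
  have hbdd : BddAbove (Set.range fun f : T => |(∫ x, f.1 x ∂ν) - ∫ x, f.1 x ∂μ|) := by
    refine ⟨2, ?_⟩
    rintro _ ⟨f, rfl⟩
    have h1 : |∫ x, f.1 x ∂ν| ≤ 1 := by
      have := norm_integral_le_of_norm_le_const (μ := ν) (C := 1)
        (ae_of_all _ fun x => by rw [Real.norm_eq_abs]; exact f.2.2 x)
      simpa using this
    have h2 : |∫ x, f.1 x ∂μ| ≤ 1 := by
      have := norm_integral_le_of_norm_le_const (μ := μ) (C := 1)
        (ae_of_all _ fun x => by rw [Real.norm_eq_abs]; exact f.2.2 x)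
      simpa using this
    calc |(∫ x, f.1 x ∂ν) - ∫ x, f.1 x ∂μ| ≤ |∫ x, f.1 x ∂ν| + |∫ x, f.1 x ∂μ| :=
          abs_sub _ _
      _ ≤ 2 := by linarith
  have hle : ∀ (h : H → ℝ), Measurable h → (∀ x, |h x| ≤ 1) →
      |(∫ x, h x ∂ν) - ∫ x, h x ∂μ| ≤ S :=
    fun h hm hb => le_ciSup hbdd (⟨h, hm, hb⟩ : T)
  have hS0 : 0 ≤ S := by
    have := hle (fun _ => 0) measurable_const (fun x => by norm_num)
    simpa using this
  have hdiff : ∀ (h : H → ℝ), Measurable h → (∀ x, |h x| ≤ κ₁⁻¹) →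
      |(∫ x, h x ∂ν) - ∫ x, h x ∂μ| ≤ S / κ₁ := by
    intro h hm hb
    have hb' : ∀ x, |κ₁ * h x| ≤ 1 := by
      intro x
      rw [abs_mul, abs_of_pos hκ₁]
      calc κ₁ * |h x| ≤ κ₁ * κ₁⁻¹ := by
            exact mul_le_mul_of_nonneg_left (hb x) hκ₁.le
        _ = 1 := mul_inv_cancel₀ hκ₁.ne'
    have := hle (fun x => κ₁ * h x) (measurable_const.mul hm) hb'
    rw [integral_const_mul, integral_const_mul, ← mul_sub, abs_mul, abs_of_pos hκ₁] at this
    rw [le_div_iff₀ hκ₁, mul_comm]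
    exact this
  haveI : Nonempty T := ⟨⟨fun _ => 0, measurable_const, fun x => by norm_num⟩⟩
  refine ciSup_le fun f => ?_
  obtain ⟨fm, fb⟩ := f.2
  set A := ∫ x, f.1 x * g x ∂ν
  set B := ∫ x, f.1 x * g x ∂μ
  set Zν := ∫ x, g x ∂ν
  set Zμ := ∫ x, g x ∂μ
  have hZν : κ₂ < Zν := hνg
  have hZμ : κ₂ < Zμ := hμg
  have hZνpos : 0 < Zν := hκ₂.trans hZν
  have hZμpos : 0 < Zμ := hκ₂.trans hZμ
  have hfg_bd : ∀ x, |f.1 x * g x| ≤ κ₁⁻¹ := by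
    intro x
    rw [abs_mul, abs_of_pos (hg_pos x)]
    calc |f.1 x| * g x ≤ 1 * κ₁⁻¹ :=
        mul_le_mul (fb x) (hg1 x) (hg_pos x).le zero_le_one
      _ = κ₁⁻¹ := one_mul _
  have hAB : |A - B| ≤ S / κ₁ := hdiff _ (fm.mul hg_meas) hfg_bd
  have hZ : |Zν - Zμ| ≤ S / κ₁ :=
    hdiff _ hg_meas (fun x => by rw [abs_of_pos (hg_pos x)]; exact hg1 x)
  have hB : |B| ≤ Zμ := by
    calc |B| ≤ ∫ x, |f.1 x * g x| ∂μ := by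
          exact norm_integral_le_integral_norm (μ := μ) (fun x => f.1 x * g x)
      _ ≤ ∫ x, g x ∂μ := by
          refine integral_mono ?_ ?_ ?_
          · exact ((hint μ _ κ₁⁻¹ (fm.mul hg_meas) hfg_bd)).abs
          · exact hint μ g κ₁⁻¹ hg_meas fun x => by
              rw [abs_of_pos (hg_pos x)]; exact hg1 x
          · intro x
            show |f.1 x * g x| ≤ g x
            rw [abs_mul, abs_of_pos (hg_pos x)]
            calc |f.1 x| * g x ≤ 1 * g x :=
                mul_le_mul_of_nonneg_right (fb x) (hg_pos x).le
              _ = g x := one_mul _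
    
  have key : |A / Zν - B / Zμ| ≤ |A - B| / Zν + |B| * |Zν - Zμ| / (Zν * Zμ) := by
    have heq : A / Zν - B / Zμ = (A - B) / Zν + B * (Zμ - Zν) / (Zν * Zμ) := by
      field_simp
      ring
    rw [heq]
    calc |(A - B) / Zν + B * (Zμ - Zν) / (Zν * Zμ)|
        ≤ |(A - B) / Zν| + |B * (Zμ - Zν) / (Zν * Zμ)| := abs_add_le _ _
      _ = |A - B| / Zν + |B| * |Zν - Zμ| / (Zν * Zμ) := by
          rw [abs_div, abs_div, abs_mul, abs_of_pos hZνpos,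
            abs_of_pos (mul_pos hZνpos hZμpos), abs_sub_comm Zμ Zν]
  have h1 : |A - B| / Zν ≤ (S / κ₁) / κ₂ :=
    div_le_div₀ (by positivity) hAB hκ₂ hZν.le
  have h2 : |B| * |Zν - Zμ| / (Zν * Zμ) ≤ (S / κ₁) / κ₂ := by
    calc |B| * |Zν - Zμ| / (Zν * Zμ) ≤ Zμ * (S / κ₁) / (Zν * Zμ) := by
          refine div_le_div₀ (by positivity) ?_ (mul_pos hZνpos hZμpos) le_rfl
          exact mul_le_mul hB hZ (abs_nonneg _) hZμpos.le
      _ = (S / κ₁) / Zν := by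
          field_simp
      _ ≤ (S / κ₁) / κ₂ := by
          refine div_le_div₀ (by positivity) le_rfl hκ₂ hZν.le
  calc |A / Zν - B / Zμ| ≤ (S / κ₁) / κ₂ + (S / κ₁) / κ₂ := by
        refine key.trans (add_le_add h1 h2)
    _ = 2 / (κ₁ * κ₂) * S := by
        field_simp
        ring
end

section
/- Let β, γ > 0 with β² + γ² = I for some constant I > 0, and let (l_i), (l_i') ∈ ℓ² with l_i → 0, l_i' → 0, l_i > −1. For each i let η_{i±} solve (l_i+1)η² − [β² l_i l_i' + (l_i + l_i') + (I−1)²/β² + 2]η + (l_i'+1) = 0. Then Σ_i [(η_{i+} −1)² + (η_{i−} −1)²] < ∞ if and only if I = 1. -/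
open Filter
open scoped ENNReal Topology

set_option maxHeartbeats 1600000 in
/-- Uniqueness of the pCN-GM proposal: with `β² + γ² = I`, the double sequence
`η_{i±} − 1` coming from the roots of
`(l_i+1)η² − [β²l_i l_i' + (l_i+l_i') + (I−1)²/β² + 2]η + (l_i'+1) = 0`
is square-summable if and only if `I = 1`. -/
theorem stmt_9 (β γ I : ℝ) (hβ : 0 < β) (hγ : 0 < γ) (hI : 0 < I)
    (hβγ : β ^ 2 + γ ^ 2 = I)
    (l l' : ℕ → ℝ) (hl : Memℓp l 2) (hl' : Memℓp l' 2)
    (hl0 : Tendsto l atTop (𝓝 0)) (hl'0 : Tendsto l' atTop (𝓝 0))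
    (hl1 : ∀ i, -1 < l i)
    (ηp ηm : ℕ → ℝ)
    (hsum : ∀ i, ηp i + ηm i =
      (β ^ 2 * l i * l' i + (l i + l' i) + (I - 1) ^ 2 / β ^ 2 + 2) / (l i + 1))
    (hprod : ∀ i, ηp i * ηm i = (l' i + 1) / (l i + 1)) :
    Summable (fun i => (ηp i - 1) ^ 2 + (ηm i - 1) ^ 2) ↔ I = 1 := by
  set c : ℝ := (I - 1) ^ 2 / β ^ 2 with hc_def
  have hβ2 : (0:ℝ) < β ^ 2 := by positivity
  have hc0 : 0 ≤ c := by positivity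
  have hden : ∀ i, (0:ℝ) < l i + 1 := fun i => by linarith [hl1 i]
  -- rewrite each term via Vieta
  have key : ∀ i, (ηp i - 1) ^ 2 + (ηm i - 1) ^ 2 =
      ((β ^ 2 * l i * l' i + (l i + l' i) + c + 2) / (l i + 1)) ^ 2
        - 2 * ((l' i + 1) / (l i + 1))
        - 2 * ((β ^ 2 * l i * l' i + (l i + l' i) + c + 2) / (l i + 1)) + 2 := by
    intro i
    rw [← hsum i, ← hprod i]; ring
  constructor
  · intro hS
    -- terms tend to 0, but they also tend to c^2 + 2c
    have h0 : Tendsto (fun i => (ηp i - 1) ^ 2 + (ηm i - 1) ^ 2) atTop (𝓝 0) :=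
      hS.tendsto_atTop_zero
    have h1 : Tendsto (fun i => l i + 1) atTop (𝓝 1) := by
      have := hl0.add_const 1
      simpa using this
    have hnum : Tendsto (fun i => β ^ 2 * l i * l' i + (l i + l' i) + c + 2) atTop
        (𝓝 (c + 2)) := by
      have h2 : Tendsto (fun i => β ^ 2 * l i * l' i + (l i + l' i) + c + 2) atTop
          (𝓝 (β ^ 2 * 0 * 0 + (0 + 0) + c + 2)) := by
        exact ((((tendsto_const_nhds.mul hl0).mul hl'0).add (hl0.add hl'0)).add_const c).add_const 2
      simpa using h2
    have hSt : Tendsto (fun i => (β ^ 2 * l i * l' i + (l i + l' i) + c + 2) / (l i + 1))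
        atTop (𝓝 (c + 2)) := by
      have := hnum.div h1 one_ne_zero
      rw [div_one] at this; exact this
    have hPt : Tendsto (fun i => (l' i + 1) / (l i + 1)) atTop (𝓝 1) := by
      have h2 : Tendsto (fun i => l' i + 1) atTop (𝓝 1) := by
        have := hl'0.add_const 1; simpa using this
      have := h2.div h1 one_ne_zero
      rw [div_one] at this; exact this
    have hlim : Tendsto (fun i => (ηp i - 1) ^ 2 + (ηm i - 1) ^ 2) atTop
        (𝓝 ((c + 2) ^ 2 - 2 * 1 - 2 * (c + 2) + 2)) := by
      have : Tendsto (fun i =>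
          ((β ^ 2 * l i * l' i + (l i + l' i) + c + 2) / (l i + 1)) ^ 2
            - 2 * ((l' i + 1) / (l i + 1))
            - 2 * ((β ^ 2 * l i * l' i + (l i + l' i) + c + 2) / (l i + 1)) + 2) atTop
          (𝓝 ((c + 2) ^ 2 - 2 * 1 - 2 * (c + 2) + 2)) := by
        exact (((hSt.pow 2).sub (hPt.const_mul 2)).sub (hSt.const_mul 2)).add_const 2
      exact this.congr fun i => (key i).symm
    have heq : (0:ℝ) = (c + 2) ^ 2 - 2 * 1 - 2 * (c + 2) + 2 :=
      tendsto_nhds_unique h0 hlim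
    have hc : c = 0 := by nlinarith
    have : (I - 1) ^ 2 = 0 := by
      have := hc
      rw [hc_def, div_eq_zero_iff] at this
      rcases this with h | h
      · exact h
      · exact absurd h (ne_of_gt hβ2)
    have : I - 1 = 0 := by
      exact pow_eq_zero_iff (by norm_num) |>.mp this
    linarith
  · intro hI1
    subst hI1
    have hc : c = 0 := by simp [hc_def]
    have hγ2 : γ ^ 2 = 1 - β ^ 2 := by linarith
    have hβle : β ^ 2 ≤ 1 := by nlinarith
    -- summability of squares
    have hsl : Summable (fun i => (l i) ^ 2) := by
      have := hl.summable (p := 2) (by norm_num)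
      simpa [Real.rpow_natCast, ENNReal.toReal_ofNat, Real.norm_eq_abs, sq_abs] using this
    have hsl' : Summable (fun i => (l' i) ^ 2) := by
      have := hl'.summable (p := 2) (by norm_num)
      simpa [Real.rpow_natCast, ENNReal.toReal_ofNat, Real.norm_eq_abs, sq_abs] using this
    have hg : Summable (fun i => 16 * ((l i) ^ 2 + (l' i) ^ 2)) :=
      ((hsl.add hsl').mul_left 16)
    apply Summable.of_norm_bounded_eventually_nat hg
    have hsmall : ∀ᶠ i in atTop, |l i| ≤ 1/2 := by
      have h := hl0.abs
      rw [abs_zero] at h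
      exact h.eventually_le_const (by norm_num : (0:ℝ) < 1/2)
    filter_upwards [hsmall] with i hi
    have ha2 := abs_le.mp hi
    have hd : (1:ℝ)/2 ≤ l i + 1 := by linarith [ha2.1]
    have hd0 : (0:ℝ) < l i + 1 := by linarith
    set a := l i with ha_def; set b := l' i with hb_def
    have hγle : γ ^ 2 ≤ 1 := by nlinarith
    have hNe : (ηp i - 1) ^ 2 + (ηm i - 1) ^ 2 =
        ((b * (β ^ 2 * a + 1)) ^ 2 + a ^ 2 - 2 * γ ^ 2 * a * b) / (a + 1) ^ 2 := by
      rw [key i, hc, hγ2, ← ha_def, ← hb_def]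
      field_simp
      ring
    have hba : |β ^ 2 * a| ≤ 1/2 := by
      rw [abs_mul, abs_of_pos hβ2]
      calc β ^ 2 * |a| ≤ 1 * (1/2) := by
            apply mul_le_mul hβle hi (abs_nonneg a) (by norm_num)
        _ = 1/2 := by norm_num
    have hba2 := abs_le.mp hba
    have hq : (β ^ 2 * a + 1) ^ 2 ≤ 9/4 := by nlinarith
    have hN1 : (b * (β ^ 2 * a + 1)) ^ 2 ≤ (9/4) * b ^ 2 := by
      nlinarith [mul_le_mul_of_nonneg_left hq (sq_nonneg b)]
    have e1 : (γ * a + γ * b) ^ 2 = γ ^ 2 * a ^ 2 + 2 * γ ^ 2 * a * b + γ ^ 2 * b ^ 2 := by ring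
    have e2 : (γ * a - γ * b) ^ 2 = γ ^ 2 * a ^ 2 - 2 * γ ^ 2 * a * b + γ ^ 2 * b ^ 2 := by ring
    have e3 : (1 - γ ^ 2) * a ^ 2 = a ^ 2 - γ ^ 2 * a ^ 2 := by ring
    have e4 : (1 - γ ^ 2) * b ^ 2 = b ^ 2 - γ ^ 2 * b ^ 2 := by ring
    have f1 := sq_nonneg (γ * a + γ * b)
    have f2 := sq_nonneg (γ * a - γ * b)
    have f3 := mul_nonneg (sub_nonneg.mpr hγle) (sq_nonneg a)
    have f4 := mul_nonneg (sub_nonneg.mpr hγle) (sq_nonneg b)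
    rw [e1] at f1; rw [e2] at f2; rw [e3] at f3; rw [e4] at f4
    have hcrossU : -(2 * γ ^ 2 * a * b) ≤ a ^ 2 + b ^ 2 := by linarith
    have hcrossL : -(a ^ 2 + b ^ 2) ≤ -(2 * γ ^ 2 * a * b) := by linarith
    have habs : |(b * (β ^ 2 * a + 1)) ^ 2 + a ^ 2 - 2 * γ ^ 2 * a * b| ≤ 4 * (a ^ 2 + b ^ 2) := by
      rw [abs_le]
      constructor
      · nlinarith [sq_nonneg (b * (β ^ 2 * a + 1)), sq_nonneg a]
      · linarith [sq_nonneg a, sq_nonneg b]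
    rw [Real.norm_eq_abs, hNe, abs_div, abs_of_pos (by positivity : (0:ℝ) < (a+1)^2)]
    rw [div_le_iff₀ (by positivity)]
    have h14 : (1:ℝ)/4 ≤ (a + 1) ^ 2 := by nlinarith
    calc |(b * (β ^ 2 * a + 1)) ^ 2 + a ^ 2 - 2 * γ ^ 2 * a * b| ≤ 4 * (a ^ 2 + b ^ 2) := habs
      _ = 16 * (a ^ 2 + b ^ 2) * (1/4) := by ring
      _ ≤ 16 * (a ^ 2 + b ^ 2) * (a + 1) ^ 2 :=
          mul_le_mul_of_nonneg_left h14 (by positivity)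
end

section
/- With C, C_j, β, γ as above and l_i = λ_{ji}/λ_i − 1, the eigenvalues of the block covariance V = [[C, γC],[γC, β² C_j + γ² C]] are (1 + γ t_i^±) λ_i with eigenvectors (φ_i, t_i^± φ_i), where t_i^± are the two roots of λ_i + γ t λ_i = (γ/t) λ_i + β² λ_{ji} + γ² λ_i; explicitly t_i^± = (β²/(2γλ_i))(λ_{ji} − λ_i) ± √((β⁴/(4γ²λ_i²))(λ_{ji} − λ_i)² + 1). -/
open scoped ENNReal RealInnerProductSpace

/-- The eigenpairs of the block covariance `V = [[C, γC],[γC, β²C_j + γ²C]]`: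
for `t_i^± = (β²/(2γλ_i))(λ_{ji} − λ_i) ± √((β⁴/(4γ²λ_i²))(λ_{ji} − λ_i)² + 1)`, the
vector `(φ_i, t_i^± φ_i)` is an eigenvector with eigenvalue `(1 + γ t_i^±) λ_i`, and
`t_i^±` solves `λ_i + γ t λ_i = (γ/t) λ_i + β² λ_{ji} + γ² λ_i`. -/
theorem stmt_11 {H : Type*} [NormedAddCommGroup H] [InnerProductSpace ℝ H]
    [CompleteSpace H]
    (b : HilbertBasis ℕ ℝ H) (C Cj : H →L[ℝ] H)
    (lam lamj : ℕ → ℝ) (hlam : ∀ i, 0 < lam i)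
    (heig : ∀ i, C (b i) = lam i • b i) (heigj : ∀ i, Cj (b i) = lamj i • b i)
    (β : ℝ) (hβ0 : 0 < β) (hβ1 : β < 1) (γ : ℝ) (hγ : γ = Real.sqrt (1 - β ^ 2))
    (V : H × H → H × H)
    (hV : ∀ x y : H, V (x, y) =
      (C x + γ • C y, γ • C x + (β ^ 2 • Cj y + γ ^ 2 • C y)))
    (tp tm : ℕ → ℝ)
    (htp : ∀ i, tp i = (β ^ 2 / (2 * γ * lam i)) * (lamj i - lam i) +
      Real.sqrt ((β ^ 4 / (4 * γ ^ 2 * (lam i) ^ 2)) * (lamj i - lam i) ^ 2 + 1))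
    (htm : ∀ i, tm i = (β ^ 2 / (2 * γ * lam i)) * (lamj i - lam i) -
      Real.sqrt ((β ^ 4 / (4 * γ ^ 2 * (lam i) ^ 2)) * (lamj i - lam i) ^ 2 + 1)) :
    ∀ i, ∀ t ∈ ({tp i, tm i} : Set ℝ),
      V (b i, t • b i) = ((1 + γ * t) * lam i) • ((b i : H), t • (b i : H)) ∧
        lam i + γ * t * lam i = (γ / t) * lam i + β ^ 2 * lamj i + γ ^ 2 * lam i := by

  intro i t ht
  have hβ2 : (0:ℝ) < 1 - β ^ 2 := by nlinarith
  have hγpos : 0 < γ := by rw [hγ]; exact Real.sqrt_pos.mpr hβ2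
  have hγ2 : γ ^ 2 = 1 - β ^ 2 := by rw [hγ]; exact Real.sq_sqrt hβ2.le
  have hl := hlam i
  set s := Real.sqrt ((β ^ 4 / (4 * γ ^ 2 * (lam i) ^ 2)) * (lamj i - lam i) ^ 2 + 1) with hsdef
  have hs2 : s ^ 2 = (β ^ 4 / (4 * γ ^ 2 * (lam i) ^ 2)) * (lamj i - lam i) ^ 2 + 1 := by
    rw [hsdef]
    exact Real.sq_sqrt (by positivity)
  -- key quadratic
  have hq : γ * lam i * t ^ 2 + β ^ 2 * (lam i - lamj i) * t - γ * lam i = 0 := by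
    rcases ht with h | h
    · rw [h, htp i, ← hsdef]
      have := hs2
      field_simp at this ⊢
      nlinarith [this, sq_nonneg s, sq_nonneg γ, sq_nonneg (lam i)]
    · rw [h, htm i, ← hsdef]
      have := hs2
      field_simp at this ⊢
      nlinarith [this, sq_nonneg s, sq_nonneg γ, sq_nonneg (lam i)]
  have ht0 : t ≠ 0 := by
    intro h0
    rw [h0] at hq
    simp at hq
    rcases hq with h | h
    · exact hγpos.ne' h
    · exact hl.ne' h
  constructor
  · rw [hV]
    have h1 : C (t • (b i : H)) = (t * lam i) • (b i : H) := by
      rw [map_smul, heig, smul_smul]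
    have h2 : Cj (t • (b i : H)) = (t * lamj i) • (b i : H) := by
      rw [map_smul, heigj, smul_smul]
    rw [h1, h2, heig]
    refine Prod.ext ?_ ?_
    · show lam i • (b i : H) + γ • (t * lam i) • (b i : H) =
        ((1 + γ * t) * lam i) • (b i : H)
      rw [smul_smul, ← add_smul]
      ring_nf
    · show γ • lam i • (b i : H) + (β ^ 2 • (t * lamj i) • (b i : H)
          + γ ^ 2 • (t * lam i) • (b i : H)) =
        ((1 + γ * t) * lam i) • t • (b i : H)
      rw [smul_smul, smul_smul, smul_smul, smul_smul, ← add_smul, ← add_smul]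
      congr 1
      linear_combination -hq + t * lam i * hγ2
  · field_simp
    linear_combination hq - t * lam i * hγ2
end

section
/- Let ν = μ(du)P(u,dv) and ν' = μ(dv)P(v,du) be two finite mixture measures on H × H with the same weights: ν = Σ_{j=1}^M w_j ν_j, ν' = Σ_{j=1}^M w_j ν_j', where all components ν_j, ν_j' are mutually equivalent measures. Then ν and ν' are equivalent, and dν'/dν = Σ_{j₂=1}^M w_{j₂} / (Σ_{j₁=1}^M w_{j₁} (dν_{j₁}/dν'_{j₂})). -/
open MeasureTheory
open scoped ENNReal

/-- A finite mixture of measures all absolutely continuous wrt `ρ` is a.c. wrt `ρ`. -/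
lemma mix_ac {X : Type*} [MeasurableSpace X] {M : ℕ} {μ : Fin M → Measure X}
    {ρ : Measure X} (c : Fin M → ℝ≥0∞) (h : ∀ j, μ j ≪ ρ) :
    (∑ j, c j • μ j) ≪ ρ := by
  intro s hs
  simp only [Measure.finset_sum_apply, Measure.smul_apply, smul_eq_mul]
  exact Finset.sum_eq_zero fun j _ => by rw [h j hs, mul_zero]

/-- If a mixture with nonzero weights is zero on a set, each component is zero there. -/
lemma mix_comp_zero {X : Type*} [MeasurableSpace X] {M : ℕ} {μ : Fin M → Measure X}
    {c : Fin M → ℝ≥0∞} {s : Set X} (hs : (∑ j, c j • μ j) s = 0) (j : Fin M)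
    (hc : c j ≠ 0) : μ j s = 0 := by
  simp only [Measure.finset_sum_apply, Measure.smul_apply, smul_eq_mul,
    Finset.sum_eq_zero_iff] at hs
  have := hs j (Finset.mem_univ j)
  simpa [hc] using this

/-- The density of a finite mixture wrt a common base measure. -/
lemma mix_rnDeriv {X : Type*} [MeasurableSpace X] {M : ℕ} (μ : Fin M → Measure X)
    (ρ : Measure X) [SigmaFinite ρ] [∀ j, SigmaFinite (μ j)]
    (c : Fin M → ℝ≥0∞) (hμρ : ∀ j, μ j ≪ ρ) :
    (fun x => ∑ j, c j * (μ j).rnDeriv ρ x) =ᵐ[ρ] (∑ j, c j • μ j).rnDeriv ρ := by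
  refine Measure.eq_rnDeriv (f := fun x => ∑ j, c j * (μ j).rnDeriv ρ x) ?_
    MeasureTheory.Measure.MutuallySingular.zero_left ?_
  · exact Finset.measurable_sum _ fun j _ =>
      (Measure.measurable_rnDeriv (μ j) ρ).const_mul _
  · rw [zero_add]
    ext s hs
    rw [withDensity_apply _ hs, Measure.finset_sum_apply]
    rw [MeasureTheory.lintegral_finset_sum _ fun j _ =>
      (Measure.measurable_rnDeriv (μ j) ρ).const_mul _]
    refine Finset.sum_congr rfl fun j _ => ?_
    rw [Measure.smul_apply, smul_eq_mul, lintegral_const_mul _ (Measure.measurable_rnDeriv _ _),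
      Measure.setLIntegral_rnDeriv (hμρ j)]

/-- Two finite mixtures `ν = Σ w_j ν_j` and `ν' = Σ w_j ν_j'` with all components mutually
equivalent are equivalent, with
`dν'/dν = Σ_{j₂} w_{j₂} / (Σ_{j₁} w_{j₁} (dν_{j₁}/dν'_{j₂}))`. -/
theorem stmt_12 {X : Type*} [MeasurableSpace X] (M : ℕ) (hM : 0 < M)
    (w : Fin M → ℝ) (hw : ∀ j, 0 < w j) (hw1 : ∑ j, w j = 1)
    (νc νc' : Fin M → Measure X)
    [∀ j, IsProbabilityMeasure (νc j)] [∀ j, IsProbabilityMeasure (νc' j)]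
    (hequiv : ∀ j k, νc j ≪ νc k ∧ νc j ≪ νc' k ∧ νc' j ≪ νc k ∧ νc' j ≪ νc' k)
    (ν ν' : Measure X)
    (hν : ν = ∑ j, ENNReal.ofReal (w j) • νc j)
    (hν' : ν' = ∑ j, ENNReal.ofReal (w j) • νc' j) :
    ν ≪ ν' ∧ ν' ≪ ν ∧
      ν'.rnDeriv ν =ᵐ[ν] fun x =>
        ∑ j₂, ENNReal.ofReal (w j₂) /
          (∑ j₁, ENNReal.ofReal (w j₁) * (νc j₁).rnDeriv (νc' j₂) x) := by
  have hc0 : ∀ j, ENNReal.ofReal (w j) ≠ 0 := fun j => by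
    simp [ENNReal.ofReal_eq_zero, not_le, hw j]
  -- basic absolute continuity facts
  have hν_ac_νc' : ∀ k, ν ≪ νc' k := fun k => by
    rw [hν]; exact mix_ac _ fun j => (hequiv j k).2.1
  have hν'_ac_ν : ν' ≪ ν := by
    rw [hν', hν]
    intro s hs
    simp only [Measure.finset_sum_apply, Measure.smul_apply, smul_eq_mul]
    refine Finset.sum_eq_zero fun j _ => ?_
    have h1 : νc j s = 0 := mix_comp_zero hs j (hc0 j)
    rw [(hequiv j j).2.2.1 h1, mul_zero]
  have hν_ac_ν' : ν ≪ ν' := by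
    rw [hν, hν']
    intro s hs
    simp only [Measure.finset_sum_apply, Measure.smul_apply, smul_eq_mul]
    refine Finset.sum_eq_zero fun j _ => ?_
    have h1 : νc' j s = 0 := mix_comp_zero hs j (hc0 j)
    rw [(hequiv j j).2.1 h1, mul_zero]
  have hνc'_ac_ν : ∀ k, νc' k ≪ ν := fun k => by
    intro s hs
    rw [hν] at hs
    exact (hequiv k k).2.2.1 (mix_comp_zero hs k (hc0 k))
  refine ⟨hν_ac_ν', hν'_ac_ν, ?_⟩
  haveI : IsFiniteMeasure ν := by
    constructor
    rw [hν]
    simp only [Measure.finset_sum_apply, Measure.smul_apply, smul_eq_mul, measure_univ, mul_one]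
    exact ENNReal.sum_lt_top.2 fun j _ => ENNReal.ofReal_lt_top
  haveI : IsFiniteMeasure ν' := by
    constructor
    rw [hν']
    simp only [Measure.finset_sum_apply, Measure.smul_apply, smul_eq_mul, measure_univ, mul_one]
    exact ENNReal.sum_lt_top.2 fun j _ => ENNReal.ofReal_lt_top
  -- Step A: denominator is dν/dνc' j₂ a.e. ν
  have hA : ∀ j₂, (fun x => ∑ j₁, ENNReal.ofReal (w j₁) * (νc j₁).rnDeriv (νc' j₂) x)
      =ᵐ[ν] ν.rnDeriv (νc' j₂) := fun j₂ => by
    have h := mix_rnDeriv νc (νc' j₂) (fun j => ENNReal.ofReal (w j))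
      (fun j => (hequiv j j₂).2.1)
    rw [← hν] at h
    exact h.filter_mono (hν_ac_νc' j₂).ae_le
  -- Step B: inverse of dν/dνc' j₂ is dνc' j₂/dν a.e. ν
  have hB : ∀ j₂, (fun x => (ν.rnDeriv (νc' j₂) x)⁻¹) =ᵐ[ν] (νc' j₂).rnDeriv ν := fun j₂ =>
    Measure.inv_rnDeriv (hν_ac_νc' j₂)
  -- Step C: dν'/dν as mixture of dνc' j₂/dν
  have hC : (fun x => ∑ j₂, ENNReal.ofReal (w j₂) * (νc' j₂).rnDeriv ν x)
      =ᵐ[ν] ν'.rnDeriv ν := by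
    have h := mix_rnDeriv νc' ν (fun j => ENNReal.ofReal (w j)) hνc'_ac_ν
    rw [← hν'] at h
    exact h
  filter_upwards [ae_all_iff.2 hA, ae_all_iff.2 hB, hC] with x hAx hBx hCx
  rw [← hCx]
  refine Finset.sum_congr rfl fun j₂ _ => ?_
  rw [div_eq_mul_inv, hAx j₂, ← hBx j₂]
end

section
/- Let μ₀ be a probability measure on H, Φ : H → [0,∞) measurable, Z = ∫ exp(−Φ) dμ₀ > 0, and define the posterior dμᵈ/dμ₀ = Z⁻¹ exp(−Φ). If Q(u,dv) is a Markov kernel such that μ₀(du)Q(u,dv) and μ₀(dv)Q(v,du) are equivalent measures on H × H, then μᵈ(du)Q(u,dv) and μᵈ(dv)Q(v,du) are equivalent, with Radon–Nikodym derivative equal to exp(Φ(u) − Φ(v)) · d[μ₀(dv)Q(v,du)]/d[μ₀(du)Q(u,dv)]. -/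
open MeasureTheory ProbabilityTheory
open scoped ENNReal ProbabilityTheory

lemma aux_compProd_withDensity {X : Type*} [MeasurableSpace X]
    (mu : Measure X) [SFinite mu] (Q : Kernel X X) [IsSFiniteKernel Q]
    {g : X → ℝ≥0∞} (hg : Measurable g) :
    (mu.withDensity g) ⊗ₘ Q = (mu ⊗ₘ Q).withDensity (fun p => g p.1) := by
  ext s hs
  have inner : ∀ x, ∫⁻ y, s.indicator (fun p : X × X => g p.1) (x, y) ∂(Q x)
      = g x * Q x (Prod.mk x ⁻¹' s) := by
    intro x
    have hind : ∀ y, s.indicator (fun p : X × X => g p.1) (x, y)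
        = (Prod.mk x ⁻¹' s).indicator (fun _ => g x) y := by
      intro y
      by_cases h : (x, y) ∈ s <;> simp [Set.indicator, h]
    simp_rw [hind]
    rw [lintegral_indicator_const (measurable_prodMk_left hs)]
  rw [Measure.compProd_apply hs, withDensity_apply _ hs,
    ← lintegral_indicator hs, Measure.lintegral_compProd
      (f := s.indicator fun p => g p.1) ((hg.comp measurable_fst).indicator hs),
    lintegral_withDensity_eq_lintegral_mul _ hg
      (Kernel.measurable_kernel_prodMk_left hs)]
  exact lintegral_congr fun x => (inner x).symm

lemma aux_map_swap_withDensity {X : Type*} [MeasurableSpace X]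
    (ν : Measure (X × X)) {h : X × X → ℝ≥0∞} (hh : Measurable h) :
    (ν.withDensity h).map Prod.swap = (ν.map Prod.swap).withDensity (h ∘ Prod.swap) := by
  ext s hs
  rw [Measure.map_apply measurable_swap hs, withDensity_apply _ (measurable_swap hs),
    withDensity_apply _ hs, setLIntegral_map hs (hh.comp measurable_swap) measurable_swap]
  simp [Prod.swap_swap_eq, Function.comp]

/-- If `μ₀(du)Q(u,dv)` and `μ₀(dv)Q(v,du)` are equivalent, then so are
`μᵈ(du)Q(u,dv)` and `μᵈ(dv)Q(v,du)` for the posterior `dμᵈ/dμ₀ = Z⁻¹ e^{−Φ}`, with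
Radon–Nikodym derivative `e^{Φ(u) − Φ(v)} · d[μ₀(dv)Q(v,du)]/d[μ₀(du)Q(u,dv)]`. -/
theorem stmt_13 {X : Type*} [MeasurableSpace X]
    (μ₀ : Measure X) [IsProbabilityMeasure μ₀]
    (Φ : X → ℝ) (hΦmeas : Measurable Φ) (hΦ0 : ∀ x, 0 ≤ Φ x)
    (Z : ℝ) (hZ : Z = ∫ x, Real.exp (-Φ x) ∂μ₀) (hZpos : 0 < Z)
    (Q : Kernel X X) [IsMarkovKernel Q]
    (μd : Measure X)
    (hμd : μd = μ₀.withDensity (fun x => ENNReal.ofReal (Z⁻¹ * Real.exp (-Φ x))))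
    (hprior : (μ₀ ⊗ₘ Q) ≪ (μ₀ ⊗ₘ Q).map Prod.swap ∧
      (μ₀ ⊗ₘ Q).map Prod.swap ≪ (μ₀ ⊗ₘ Q)) :
    (μd ⊗ₘ Q) ≪ (μd ⊗ₘ Q).map Prod.swap ∧
      (μd ⊗ₘ Q).map Prod.swap ≪ (μd ⊗ₘ Q) ∧
      ((μd ⊗ₘ Q).map Prod.swap).rnDeriv (μd ⊗ₘ Q) =ᵐ[μd ⊗ₘ Q] fun p =>
        ENNReal.ofReal (Real.exp (Φ p.1 - Φ p.2)) *
          ((μ₀ ⊗ₘ Q).map Prod.swap).rnDeriv (μ₀ ⊗ₘ Q) p := by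
  set f : X → ℝ≥0∞ := fun x => ENNReal.ofReal (Z⁻¹ * Real.exp (-Φ x)) with hf
  have hfmeas : Measurable f :=
    ENNReal.measurable_ofReal.comp (((hΦmeas.neg).exp).const_mul _)
  have hfpos : ∀ x, f x ≠ 0 := fun x => by
    simp only [hf, ne_eq, ENNReal.ofReal_eq_zero, not_le]
    positivity
  have hfne : ∀ x, f x ≠ ∞ := fun x => ENNReal.ofReal_ne_top
  set ν : Measure (X × X) := μ₀ ⊗ₘ Q with hν
  set νs : Measure (X × X) := ν.map Prod.swap with hνs
  have h1 : μd ⊗ₘ Q = ν.withDensity (fun p => f p.1) := by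
    rw [hμd]; exact aux_compProd_withDensity μ₀ Q hfmeas
  have h2 : (μd ⊗ₘ Q).map Prod.swap = νs.withDensity (fun p => f p.2) := by
    rw [h1, aux_map_swap_withDensity (h := fun p => f p.1) ν (hfmeas.comp measurable_fst)]
    rfl
  have hf1meas : Measurable (fun p : X × X => f p.1) := hfmeas.comp measurable_fst
  have hf2meas : Measurable (fun p : X × X => f p.2) := hfmeas.comp measurable_snd
  have hac1 : ν.withDensity (fun p => f p.1) ≪ ν := withDensity_absolutelyContinuous _ _
  have hac1' : ν ≪ ν.withDensity (fun p => f p.1) :=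
    withDensity_absolutelyContinuous' hf1meas.aemeasurable (.of_forall fun p => hfpos p.1)
  have hac2 : νs.withDensity (fun p => f p.2) ≪ νs := withDensity_absolutelyContinuous _ _
  have hac2' : νs ≪ νs.withDensity (fun p => f p.2) :=
    withDensity_absolutelyContinuous' hf2meas.aemeasurable (.of_forall fun p => hfpos p.2)
  refine ⟨?_, ?_, ?_⟩
  · rw [h2, h1]; exact (hac1.trans hprior.1).trans hac2'
  · rw [h2, h1]; exact (hac2.trans hprior.2).trans hac1'
  · have hνfin : IsFiniteMeasure ν := by infer_instance
    have hνsfin : IsFiniteMeasure νs := by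
      constructor
      rw [hνs, Measure.map_apply measurable_swap MeasurableSet.univ]
      exact measure_lt_top _ _
    have hSF1 : SigmaFinite (ν.withDensity (fun p => f p.1)) :=
      SigmaFinite.withDensity_of_ne_top (.of_forall fun p => hfne p.1)
    have hSF2 : SigmaFinite (νs.withDensity (fun p => f p.2)) :=
      SigmaFinite.withDensity_of_ne_top (.of_forall fun p => hfne p.2)
    have step1 : (νs.withDensity (fun p => f p.2)).rnDeriv (ν.withDensity (fun p => f p.1))
        =ᵐ[ν.withDensity (fun p => f p.1)]
        fun p => f p.2 * νs.rnDeriv (ν.withDensity (fun p => f p.1)) p :=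
      Measure.rnDeriv_withDensity_left hf2meas.aemeasurable (.of_forall fun p => hfne p.2)
    have step2 : νs.rnDeriv (ν.withDensity (fun p => f p.1)) =ᵐ[ν]
        fun p => (f p.1)⁻¹ * νs.rnDeriv ν p :=
      Measure.rnDeriv_withDensity_right νs ν hf1meas.aemeasurable
        (.of_forall fun p => hfpos p.1) (.of_forall fun p => hfne p.1)
    have step1' : (νs.withDensity (fun p => f p.2)).rnDeriv (ν.withDensity (fun p => f p.1))
        =ᵐ[ν] fun p => f p.2 * νs.rnDeriv (ν.withDensity (fun p => f p.1)) p :=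
      hac1'.ae_eq step1
    have key : ∀ p : X × X, f p.2 * (f p.1)⁻¹ =
        ENNReal.ofReal (Real.exp (Φ p.1 - Φ p.2)) := by
      intro p
      rw [hf]
      rw [← ENNReal.ofReal_inv_of_pos (by positivity), ← ENNReal.ofReal_mul (by positivity)]
      congr 1
      have hZne : Z ≠ 0 := ne_of_gt hZpos
      rw [mul_inv, inv_inv, ← Real.exp_neg, neg_neg]
      rw [show Z⁻¹ * Real.exp (-Φ p.2) * (Z * Real.exp (Φ p.1))
          = Z⁻¹ * Z * (Real.exp (-Φ p.2) * Real.exp (Φ p.1)) from by ring,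
        inv_mul_cancel₀ hZne, one_mul, ← Real.exp_add]
      congr 1
      ring
    have main : (νs.withDensity (fun p => f p.2)).rnDeriv (ν.withDensity (fun p => f p.1))
        =ᵐ[ν] fun p => ENNReal.ofReal (Real.exp (Φ p.1 - Φ p.2)) * νs.rnDeriv ν p := by
      filter_upwards [step1', step2] with p h1p h2p
      rw [h1p, h2p, ← key p, ← mul_assoc]
    have main' := hac1.ae_eq main
    rw [h2, h1]
    exact main'
end

section
/- Let P be the Metropolis–Hastings kernel with independence proposal Q (a probability measure) and target μ_post: P(u,dv) = Q(dv)a(u,v) + δ_u(dv)∫(1 − a(u,w))Q(dw), where a(u,v) = min{1, (dμ_post/dQ)(v) (dQ/dμ_post)(u)} and Q is equivalent to μ_post. Then for any probability measure μ^N, d(Qμ^N, Pμ^N) ≤ 2 d(Q, μ_post) + 2 d(μ^N, μ_post), where d is the total variation distance and Qμ^N denotes the measure Q itself (the independence proposal ignores the input). -/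
open MeasureTheory
open scoped ENNReal

private lemma aux_intg {α : Type*} [MeasurableSpace α] (μ : Measure α) [IsFiniteMeasure μ]
    {f : α → ℝ} (hf : AEStronglyMeasurable f μ) {C : ℝ} (h : ∀ x, |f x| ≤ C) :
    Integrable f μ :=
  Integrable.mono' (integrable_const C) hf
    (Filter.Eventually.of_forall fun x => by simpa [Real.norm_eq_abs] using h x)

private lemma aux_abs_int {α : Type*} [MeasurableSpace α] (μ : Measure α)
    [IsProbabilityMeasure μ] {f : α → ℝ} {C : ℝ} (h : ∀ x, |f x| ≤ C) :
    |∫ x, f x ∂μ| ≤ C := by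
  have := norm_integral_le_of_norm_le_const (μ := μ) (f := f) (C := C)
    (Filter.Eventually.of_forall fun x => by simpa [Real.norm_eq_abs] using h x)
  simpa [Real.norm_eq_abs, measure_univ] using this

private lemma aux_bdd {α : Type*} [MeasurableSpace α] (μ ν : Measure α)
    [IsProbabilityMeasure μ] [IsProbabilityMeasure ν] :
    BddAbove (Set.range fun f : {f : α → ℝ // Measurable f ∧ ∀ x, |f x| ≤ 1} =>
      |(∫ x, f.1 x ∂μ) - ∫ x, f.1 x ∂ν|) := by
  refine ⟨2, ?_⟩
  rintro y ⟨f, rfl⟩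
  have h1 : |∫ x, f.1 x ∂μ| ≤ 1 := aux_abs_int μ f.2.2
  have h2 : |∫ x, f.1 x ∂ν| ≤ 1 := aux_abs_int ν f.2.2
  calc |(∫ x, f.1 x ∂μ) - ∫ x, f.1 x ∂ν| ≤ |∫ x, f.1 x ∂μ| + |∫ x, f.1 x ∂ν| := abs_sub _ _
    _ ≤ 2 := by linarith

/-- For the independence Metropolis–Hastings kernel with proposal `Q` and target
`μ_post`, `d(Qμ^N, Pμ^N) ≤ 2 d(Q, μ_post) + 2 d(μ^N, μ_post)` in total variation. -/
theorem stmt_17 {H : Type*} [MeasurableSpace H]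
    (Q μpost μN : Measure H)
    [IsProbabilityMeasure Q] [IsProbabilityMeasure μpost] [IsProbabilityMeasure μN]
    (hQμ : Q ≪ μpost) (hμQ : μpost ≪ Q)
    (a : H → H → ℝ)
    (ha : ∀ u v, a u v = min 1 ((μpost.rnDeriv Q v).toReal * (Q.rnDeriv μpost u).toReal)) :
    (⨆ f : {f : H → ℝ // Measurable f ∧ ∀ x, |f x| ≤ 1},
        abs ((∫ v, f.1 v ∂Q) -
          ((∫ u, ∫ v, f.1 v * a u v ∂Q ∂μN) +
            ∫ u, f.1 u * (∫ w, (1 - a u w) ∂Q) ∂μN)))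
      ≤ 2 * (⨆ f : {f : H → ℝ // Measurable f ∧ ∀ x, |f x| ≤ 1},
          abs ((∫ x, f.1 x ∂Q) - ∫ x, f.1 x ∂μpost))
        + 2 * (⨆ f : {f : H → ℝ // Measurable f ∧ ∀ x, |f x| ≤ 1},
          abs ((∫ x, f.1 x ∂μN) - ∫ x, f.1 x ∂μpost)) := by
  set D1 := ⨆ f : {f : H → ℝ // Measurable f ∧ ∀ x, |f x| ≤ 1},
      |(∫ x, f.1 x ∂Q) - ∫ x, f.1 x ∂μpost| with hD1def
  set D2 := ⨆ f : {f : H → ℝ // Measurable f ∧ ∀ x, |f x| ≤ 1},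
      |(∫ x, f.1 x ∂μN) - ∫ x, f.1 x ∂μpost| with hD2def
  have hne : Nonempty {f : H → ℝ // Measurable f ∧ ∀ x, |f x| ≤ 1} :=
    ⟨⟨fun _ => 0, measurable_const, fun x => by simp⟩⟩
  apply ciSup_le
  rintro ⟨f, hfm, hfb⟩
  dsimp only
  -- notation
  set g : H → ℝ := fun x => (μpost.rnDeriv Q x).toReal with hgdef
  set hh : H → ℝ := fun x => (Q.rnDeriv μpost x).toReal with hhdef
  have hg : Measurable g := (Measure.measurable_rnDeriv _ _).ennreal_toReal
  have hhm : Measurable hh := (Measure.measurable_rnDeriv _ _).ennreal_toReal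
  have hg0 : ∀ x, 0 ≤ g x := fun x => ENNReal.toReal_nonneg
  have hh0 : ∀ x, 0 ≤ hh x := fun x => ENNReal.toReal_nonneg
  have ha' : ∀ u v, a u v = min 1 (g v * hh u) := ha
  have ha0 : ∀ u v, 0 ≤ a u v := fun u v => by
    rw [ha']; exact le_min zero_le_one (mul_nonneg (hg0 v) (hh0 u))
  have ha1 : ∀ u v, a u v ≤ 1 := fun u v => by rw [ha']; exact min_le_left _ _
  have haMeas : Measurable fun p : H × H => a p.1 p.2 := by
    have : (fun p : H × H => a p.1 p.2) = fun p : H × H => min 1 (g p.2 * hh p.1) := by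
      funext p; exact ha' p.1 p.2
    rw [this]
    exact measurable_const.min ((hg.comp measurable_snd).mul (hhm.comp measurable_fst))
  have haMeas1 : ∀ u, Measurable fun v => a u v :=
    fun u => haMeas.comp (measurable_prodMk_left)
  -- φ
  set φ : H → ℝ := fun u => ∫ v, (f v - f u) * (1 - a u v) ∂Q with hφdef
  have hKm : Measurable fun p : H × H => (f p.2 - f p.1) * (1 - a p.1 p.2) :=
    ((hfm.comp measurable_snd).sub (hfm.comp measurable_fst)).mul
      (measurable_const.sub haMeas)
  have hφm : Measurable φ :=
    (hKm.stronglyMeasurable.integral_prod_right' (ν := Q)).measurable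
  have hφb : ∀ u, |φ u| ≤ 2 := by
    intro u
    apply aux_abs_int
    intro v
    have h1 : |f v - f u| ≤ 2 := by
      have := hfb v; have := hfb u
      rw [abs_sub_le_iff]; constructor <;> cases abs_le.1 (hfb v) <;>
        cases abs_le.1 (hfb u) <;> linarith
    have h2 : |1 - a u v| ≤ 1 := by
      rw [abs_le]; constructor
      · linarith [ha1 u v]
      · linarith [ha0 u v]
    calc |(f v - f u) * (1 - a u v)| = |f v - f u| * |1 - a u v| := abs_mul _ _
      _ ≤ 2 * 1 := mul_le_mul h1 h2 (abs_nonneg _) (by norm_num)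
      _ = 2 := by norm_num
  -- Step A : the quantity equals ∫ φ dμN
  have hIfaQ : ∀ u, Integrable (fun v => f v * a u v) Q := by
    intro u
    apply aux_intg Q ((hfm.mul (haMeas1 u)).aestronglyMeasurable) (C := 1)
    intro v
    calc |f v * a u v| = |f v| * |a u v| := abs_mul _ _
      _ ≤ 1 * 1 := mul_le_mul (hfb v) (by rw [abs_le]; exact ⟨by linarith [ha0 u v], ha1 u v⟩)
          (abs_nonneg _) zero_le_one
      _ = 1 := by norm_num
  have hIfQ : Integrable f Q := aux_intg Q hfm.aestronglyMeasurable hfb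
  have hI1aQ : ∀ u, Integrable (fun v => 1 - a u v) Q := by
    intro u
    apply aux_intg Q ((measurable_const.sub (haMeas1 u)).aestronglyMeasurable) (C := 1)
    intro v
    simp only [Pi.sub_apply]; rw [abs_le]; exact ⟨by linarith [ha1 u v], by linarith [ha0 u v]⟩
  have hinner : ∀ u, (∫ v, f v ∂Q) -
      ((∫ v, f v * a u v ∂Q) + f u * ∫ w, (1 - a u w) ∂Q) = φ u := by
    intro u
    have e1 : f u * ∫ w, (1 - a u w) ∂Q = ∫ w, f u * (1 - a u w) ∂Q :=
      (integral_const_mul _ _).symm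
    have e2 : (∫ v, f v ∂Q) - (∫ v, f v * a u v ∂Q) = ∫ v, f v * (1 - a u v) ∂Q := by
      rw [← integral_sub hIfQ (hIfaQ u)]
      congr 1; funext v; ring
    have hIfu : Integrable (fun w => f u * (1 - a u w)) Q := (hI1aQ u).const_mul _
    have hIfv : Integrable (fun v => f v * (1 - a u v)) Q := by
      apply aux_intg Q ((hfm.mul (measurable_const.sub (haMeas1 u))).aestronglyMeasurable) (C := 1)
      intro v
      calc |f v * (1 - a u v)| = |f v| * |1 - a u v| := abs_mul _ _
        _ ≤ 1 * 1 := mul_le_mul (hfb v)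
            (by rw [abs_le]; exact ⟨by linarith [ha1 u v], by linarith [ha0 u v]⟩)
            (abs_nonneg _) zero_le_one
        _ = 1 := by norm_num
    rw [e1, sub_add_eq_sub_sub, e2, ← integral_sub hIfv hIfu]
    congr 1; funext v; ring
  have hB : Integrable (fun u => ∫ v, f v * a u v ∂Q) μN := by
    apply aux_intg μN ?_ (C := 1)
    · intro u
      apply aux_abs_int
      intro v
      calc |f v * a u v| = |f v| * |a u v| := abs_mul _ _
        _ ≤ 1 * 1 := mul_le_mul (hfb v)
            (by rw [abs_le]; exact ⟨by linarith [ha0 u v], ha1 u v⟩) (abs_nonneg _) zero_le_one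
        _ = 1 := by norm_num
    · exact (((hfm.comp measurable_snd).mul haMeas).stronglyMeasurable.integral_prod_right'
        (ν := Q)).measurable.aestronglyMeasurable
  have hC : Integrable (fun u => f u * ∫ w, (1 - a u w) ∂Q) μN := by
    apply aux_intg μN ?_ (C := 1)
    · intro u
      have h2 : |∫ w, (1 - a u w) ∂Q| ≤ 1 := by
        apply aux_abs_int
        intro w
        rw [abs_le]; exact ⟨by linarith [ha1 u w], by linarith [ha0 u w]⟩
      calc |f u * ∫ w, (1 - a u w) ∂Q| = |f u| * |∫ w, (1 - a u w) ∂Q| := abs_mul _ _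
        _ ≤ 1 * 1 := mul_le_mul (hfb u) h2 (abs_nonneg _) zero_le_one
        _ = 1 := by norm_num
    · exact (hfm.mul
        ((measurable_const.sub haMeas).stronglyMeasurable.integral_prod_right'
          (ν := Q)).measurable).aestronglyMeasurable
  have stepA : (∫ v, f v ∂Q) -
      ((∫ u, ∫ v, f v * a u v ∂Q ∂μN) + ∫ u, f u * ∫ w, (1 - a u w) ∂Q ∂μN)
      = ∫ u, φ u ∂μN := by
    have : ∫ u, φ u ∂μN = ∫ u, ((∫ v, f v ∂Q) -
        ((∫ v, f v * a u v ∂Q) + f u * ∫ w, (1 - a u w) ∂Q)) ∂μN :=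
      integral_congr_ae (Filter.Eventually.of_forall fun u => (hinner u).symm)
    have hBC : Integrable (fun u => (∫ v, f v * a u v ∂Q) + f u * ∫ w, (1 - a u w) ∂Q) μN :=
      hB.add hC
    rw [this, integral_sub (integrable_const _) hBC, integral_add hB hC,
      integral_const, probReal_univ]
    simp
  -- Step B : |∫ φ dμN - ∫ φ dμpost| ≤ 2 * D2
  have stepB : |(∫ u, φ u ∂μN) - ∫ u, φ u ∂μpost| ≤ 2 * D2 := by
    have hmem : (fun x => φ x / 2) ∈ {f : H → ℝ | Measurable f ∧ ∀ x, |f x| ≤ 1} := by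
      refine ⟨hφm.div_const 2, fun x => ?_⟩
      rw [abs_div]
      have := hφb x
      rw [abs_of_pos (by norm_num : (0:ℝ) < 2)]
      linarith
    have key := le_ciSup (aux_bdd μN μpost) (⟨fun x => φ x / 2, hmem⟩ :
      {f : H → ℝ // Measurable f ∧ ∀ x, |f x| ≤ 1})
    rw [hD2def] at *
    have e1 : ∫ x, φ x / 2 ∂μN = (∫ x, φ x ∂μN) / 2 := integral_div _ _
    have e2 : ∫ x, φ x / 2 ∂μpost = (∫ x, φ x ∂μpost) / 2 := integral_div _ _
    have : |(∫ x, φ x ∂μN) / 2 - (∫ x, φ x ∂μpost) / 2| ≤ D2 := by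
      rw [← e1, ← e2]; exact key
    rw [div_sub_div_same, abs_div, abs_of_pos (by norm_num : (0:ℝ) < 2)] at this
    linarith
  -- Step C : ∫ φ dμpost = ∫ f dQ - ∫ f dμpost
  have hgInt : Integrable g Q := Measure.integrable_toReal_rnDeriv
  have hgQ1 : ∫ x, g x ∂Q = 1 := by
    rw [hgdef]
    rw [Measure.integral_toReal_rnDeriv hμQ, probReal_univ]
  have hfgμpost : ∫ x, f x * g x ∂Q = ∫ x, f x ∂μpost := by
    rw [← integral_rnDeriv_smul hμQ (f := f)]
    congr 1; funext x; rw [smul_eq_mul]; ring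
  -- a.e. identity
  have hae : ∀ᵐ u ∂Q, ∀ v, g u * (1 - a u v) = max (g u - g v) 0 := by
    have hmul : Q.rnDeriv μpost * μpost.rnDeriv Q =ᶠ[ae Q] Q.rnDeriv Q :=
      Measure.rnDeriv_mul_rnDeriv hQμ
    have hself : Q.rnDeriv Q =ᶠ[ae Q] fun _ => 1 := Measure.rnDeriv_self Q
    have hfin1 : ∀ᵐ u ∂Q, μpost.rnDeriv Q u < ⊤ := Measure.rnDeriv_lt_top _ _
    have hfin2 : ∀ᵐ u ∂Q, Q.rnDeriv μpost u < ⊤ :=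
      hQμ.ae_le (Measure.rnDeriv_lt_top Q μpost)
    filter_upwards [hmul, hself, hfin1, hfin2] with u h1 h2 h3 h4
    have hprod : Q.rnDeriv μpost u * μpost.rnDeriv Q u = 1 := by
      have := h1.trans h2.symm.symm
      simpa using h1.trans (by rw [h2])
    have hreal : hh u * g u = 1 := by
      rw [hhdef, hgdef]
      rw [← ENNReal.toReal_mul, hprod, ENNReal.toReal_one]
    have hgpos : 0 < g u := by
      rcases lt_or_eq_of_le (hg0 u) with h | h
      · exact h
      · exfalso; rw [← h] at hreal; simp at hreal
    intro v
    rw [ha']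
    rcases le_total (g v) (g u) with hc | hc
    · have hle : g v * hh u ≤ 1 := by
        have h1 : g v * hh u ≤ g u * hh u := mul_le_mul_of_nonneg_right hc (hh0 u)
        calc g v * hh u ≤ g u * hh u := h1
          _ = 1 := by rw [mul_comm]; exact hreal
      rw [min_eq_right hle, max_eq_left (by linarith : (0:ℝ) ≤ g u - g v)]
      have : g u * (g v * hh u) = g v := by
        calc g u * (g v * hh u) = g v * (hh u * g u) := by ring
          _ = g v := by rw [hreal, mul_one]
      linarith [this, mul_one (g u), mul_sub (g u) 1 (g v * hh u)]
    · have hge : (1:ℝ) ≤ g v * hh u := by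
        have h1 : g u * hh u ≤ g v * hh u := mul_le_mul_of_nonneg_right hc (hh0 u)
        calc (1:ℝ) = g u * hh u := by rw [mul_comm]; exact hreal.symm
          _ ≤ g v * hh u := h1
      rw [min_eq_left hge, max_eq_right (by linarith : g u - g v ≤ (0:ℝ))]
      ring
  -- rewrite ∫ φ dμpost
  have stepC1 : ∫ u, φ u ∂μpost
      = ∫ u, ∫ v, (f v - f u) * max (g u - g v) 0 ∂Q ∂Q := by
    rw [← integral_rnDeriv_smul hμQ (f := φ)]
    refine integral_congr_ae ?_
    filter_upwards [hae] with u hu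
    rw [smul_eq_mul, hφdef]
    rw [← integral_const_mul]
    refine integral_congr_ae (Filter.Eventually.of_forall fun v => ?_)
    have := hu v
    calc g u * ((f v - f u) * (1 - a u v)) = (f v - f u) * (g u * (1 - a u v)) := by ring
      _ = (f v - f u) * max (g u - g v) 0 := by rw [this]
  -- product integrability
  have hgfst : Integrable (fun p : H × H => g p.1) (Q.prod Q) := by
    have := hgInt.mul_prod (integrable_const (1:ℝ)) (ν := Q)
    simpa using this
  have hgsnd : Integrable (fun p : H × H => g p.2) (Q.prod Q) := by
    have := (integrable_const (1:ℝ)).mul_prod hgInt (μ := Q)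
    simpa using this
  have hFmeas : Measurable fun p : H × H => (f p.2 - f p.1) * max (g p.1 - g p.2) 0 :=
    ((hfm.comp measurable_snd).sub (hfm.comp measurable_fst)).mul
      (((hg.comp measurable_fst).sub (hg.comp measurable_snd)).max measurable_const)
  have hF'meas : Measurable fun p : H × H => (f p.1 - f p.2) * max (g p.2 - g p.1) 0 :=
    ((hfm.comp measurable_fst).sub (hfm.comp measurable_snd)).mul
      (((hg.comp measurable_snd).sub (hg.comp measurable_fst)).max measurable_const)
  have habs2 : ∀ x y : H, |f x - f y| ≤ 2 := by
    intro x y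
    cases abs_le.1 (hfb x) <;> cases abs_le.1 (hfb y)
    rw [abs_sub_le_iff]; constructor <;> linarith
  have hFb : ∀ p : H × H, ‖(f p.2 - f p.1) * max (g p.1 - g p.2) 0‖ ≤ 2 * g p.1 := by
    intro p
    rw [Real.norm_eq_abs, abs_mul, abs_of_nonneg (le_max_right (g p.1 - g p.2) 0)]
    have h1 : max (g p.1 - g p.2) 0 ≤ g p.1 := by
      apply max_le (by linarith [hg0 p.2]) (hg0 p.1)
    calc |f p.2 - f p.1| * max (g p.1 - g p.2) 0 ≤ 2 * max (g p.1 - g p.2) 0 :=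
          mul_le_mul_of_nonneg_right (habs2 _ _) (le_max_right _ _)
      _ ≤ 2 * g p.1 := by linarith
  have hF'b : ∀ p : H × H, ‖(f p.1 - f p.2) * max (g p.2 - g p.1) 0‖ ≤ 2 * g p.2 := by
    intro p
    rw [Real.norm_eq_abs, abs_mul, abs_of_nonneg (le_max_right (g p.2 - g p.1) 0)]
    have h1 : max (g p.2 - g p.1) 0 ≤ g p.2 := by
      apply max_le (by linarith [hg0 p.1]) (hg0 p.2)
    calc |f p.1 - f p.2| * max (g p.2 - g p.1) 0 ≤ 2 * max (g p.2 - g p.1) 0 :=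
          mul_le_mul_of_nonneg_right (habs2 _ _) (le_max_right _ _)
      _ ≤ 2 * g p.2 := by linarith
  have hFint : Integrable (fun p : H × H => (f p.2 - f p.1) * max (g p.1 - g p.2) 0)
      (Q.prod Q) :=
    Integrable.mono' (hgfst.const_mul 2) hFmeas.aestronglyMeasurable
      (Filter.Eventually.of_forall hFb)
  have hF'int : Integrable (fun p : H × H => (f p.1 - f p.2) * max (g p.2 - g p.1) 0)
      (Q.prod Q) :=
    Integrable.mono' (hgsnd.const_mul 2) hF'meas.aestronglyMeasurable
      (Filter.Eventually.of_forall hF'b)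
  set T := ∫ u, ∫ v, (f v - f u) * max (g u - g v) 0 ∂Q ∂Q with hTdef
  have hTprod : T = ∫ p : H × H, (f p.2 - f p.1) * max (g p.1 - g p.2) 0 ∂(Q.prod Q) :=
    integral_integral (f := fun u v => (f v - f u) * max (g u - g v) 0) hFint
  have hTswap : T = ∫ p : H × H, (f p.1 - f p.2) * max (g p.2 - g p.1) 0 ∂(Q.prod Q) := by
    rw [hTdef, integral_integral_swap (f := fun u v => (f v - f u) * max (g u - g v) 0) hFint]
    exact integral_integral (f := fun v u => (f v - f u) * max (g u - g v) 0) hF'int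
  have hTT : T + T = ∫ p : H × H, (f p.2 - f p.1) * (g p.1 - g p.2) ∂(Q.prod Q) := by
    nth_rewrite 2 [hTswap]
    rw [hTprod]
    rw [← integral_add hFint hF'int]
    refine integral_congr_ae (Filter.Eventually.of_forall fun p => ?_)
    dsimp only
    rcases le_total (g p.2) (g p.1) with hc | hc
    · rw [max_eq_left (by linarith : (0:ℝ) ≤ g p.1 - g p.2),
        max_eq_right (by linarith : g p.2 - g p.1 ≤ (0:ℝ))]
      ring
    · rw [max_eq_right (by linarith : g p.1 - g p.2 ≤ (0:ℝ)),
        max_eq_left (by linarith : (0:ℝ) ≤ g p.2 - g p.1)]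
      ring
  -- expand the product integral
  have hfgInt : Integrable (fun x => f x * g x) Q := by
    exact hgInt.bdd_mul hfm.aestronglyMeasurable (c := 1) (Filter.Eventually.of_forall fun x => by
      rw [Real.norm_eq_abs]; exact hfb x)
  have hexp : ∫ p : H × H, (f p.2 - f p.1) * (g p.1 - g p.2) ∂(Q.prod Q)
      = 2 * ((∫ x, f x ∂Q) - ∫ x, f x ∂μpost) := by
    have i1 : Integrable (fun p : H × H => g p.1 * f p.2) (Q.prod Q) :=
      hgInt.mul_prod hIfQ
    have i2 : Integrable (fun p : H × H => (1:ℝ) * (f p.2 * g p.2)) (Q.prod Q) :=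
      (integrable_const 1).mul_prod hfgInt
    have i3 : Integrable (fun p : H × H => (f p.1 * g p.1) * (1:ℝ)) (Q.prod Q) :=
      hfgInt.mul_prod (integrable_const 1)
    have i4 : Integrable (fun p : H × H => f p.1 * g p.2) (Q.prod Q) :=
      hIfQ.mul_prod hgInt
    have e : (fun p : H × H => (f p.2 - f p.1) * (g p.1 - g p.2))
        = fun p : H × H => (g p.1 * f p.2 + f p.1 * g p.2)
            - ((1:ℝ) * (f p.2 * g p.2) + (f p.1 * g p.1) * (1:ℝ)) := by
      funext p; ring
    have i14 : Integrable (fun p : H × H => g p.1 * f p.2 + f p.1 * g p.2) (Q.prod Q) :=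
      i1.add i4
    have i23 : Integrable (fun p : H × H => (1:ℝ) * (f p.2 * g p.2) + (f p.1 * g p.1) * (1:ℝ))
        (Q.prod Q) := i2.add i3
    have e2 : ∫ p : H × H, (1:ℝ) * (f p.2 * g p.2) ∂(Q.prod Q)
        = (∫ _x, (1:ℝ) ∂Q) * ∫ x, f x * g x ∂Q :=
      integral_prod_mul (fun _ => (1:ℝ)) (fun x => f x * g x)
    have e3 : ∫ p : H × H, (f p.1 * g p.1) * (1:ℝ) ∂(Q.prod Q)
        = (∫ x, f x * g x ∂Q) * ∫ _x, (1:ℝ) ∂Q :=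
      integral_prod_mul (fun x => f x * g x) (fun _ => (1:ℝ))
    rw [e, integral_sub i14 i23, integral_add i1 i4, integral_add i2 i3,
      integral_prod_mul, integral_prod_mul, e2, e3, hgQ1, hfgμpost]
    simp only [integral_const, measure_univ, probReal_univ, ENNReal.toReal_one, smul_eq_mul, mul_one, one_mul]
    ring
  have stepC : ∫ u, φ u ∂μpost = (∫ x, f x ∂Q) - ∫ x, f x ∂μpost := by
    have : T = (∫ x, f x ∂Q) - ∫ x, f x ∂μpost := by
      have := hTT.trans hexp; linarith
    rw [stepC1]; exact this
  -- finish
  have hD1b : |(∫ x, f x ∂Q) - ∫ x, f x ∂μpost| ≤ D1 :=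
    le_ciSup (aux_bdd Q μpost) (⟨f, hfm, hfb⟩ : {f : H → ℝ // Measurable f ∧ ∀ x, |f x| ≤ 1})
  have hD1nn : 0 ≤ D1 := le_trans (abs_nonneg _) hD1b
  rw [stepA]
  calc |∫ u, φ u ∂μN|
      ≤ |(∫ u, φ u ∂μN) - ∫ u, φ u ∂μpost| + |∫ u, φ u ∂μpost| := by
        have := abs_sub_abs_le_abs_sub (∫ u, φ u ∂μN) (∫ u, φ u ∂μpost)
        have h2 := abs_add_le ((∫ u, φ u ∂μN) - ∫ u, φ u ∂μpost) (∫ u, φ u ∂μpost)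
        calc |∫ u, φ u ∂μN| = |((∫ u, φ u ∂μN) - ∫ u, φ u ∂μpost) + ∫ u, φ u ∂μpost| := by
              ring_nf
          _ ≤ _ := h2
    _ ≤ 2 * D2 + D1 := by
        refine add_le_add stepB ?_
        rw [stepC]; exact hD1b
    _ ≤ 2 * D1 + 2 * D2 := by linarith
end
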